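/- arXiv:1105.0497 — 3 statements merged into one kernel-verified Lean document; each statement's English description precedes it below -/
import Mathlib

section
/- Let f : U → V be a map in the set-up and let X be a finite union of puzzle pieces. Then for every z ∈ D(X) ∖ X, the sets L_z(X), f(L_z(X)), …, f^{k(z)−1}(L_z(X)) are pairwise disjoint. -/
open Set Function Topology

noncomputable section

/-- A (bounded) Jordan domain in the plane: a bounded connected open set whose
frontier is a Jordan curve, i.e. an injective continuous image of the circle. -/
def IsJordanDomain (Ω : Set ℂ) : Prop :=
  IsOpen Ω ∧ IsConnected Ω ∧ Bornology.IsBounded Ω ∧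
  ∃ g : Metric.sphere (0:ℂ) 1 → ℂ, Continuous g ∧ Function.Injective g ∧
    Set.range g = frontier Ω

/-- `A` is strictly contained in `X`: it is a proper subset of some connected
component of `X`. -/
def StrictlyContainedIn (A X : Set ℂ) : Prop :=
  ∃ x ∈ X, A ⊂ connectedComponentIn X x

/-- The set-up: `V ⊆ ℂ` is open with finitely many components, each a bounded Jordan
domain, with pairwise disjoint closures; `U` is open with closure contained in `V`,
with finitely many components with pairwise disjoint closures; `f : U → V` is proper
holomorphic; every critical point of `f` lies in `K_f`. -/
structure Setup where
  U : Set ℂ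
  V : Set ℂ
  f : ℂ → ℂ
  hV_open : IsOpen V
  hV_comp_finite : {C : Set ℂ | ∃ x ∈ V, C = connectedComponentIn V x}.Finite
  hV_jordan : ∀ x ∈ V, IsJordanDomain (connectedComponentIn V x)
  hV_disj : ∀ x ∈ V, ∀ y ∈ V, connectedComponentIn V x ≠ connectedComponentIn V y →
    closure (connectedComponentIn V x) ∩ closure (connectedComponentIn V y) = ∅
  hU_open : IsOpen U
  hUV : closure U ⊆ V
  hU_comp_finite : {C : Set ℂ | ∃ x ∈ U, C = connectedComponentIn U x}.Finite
  hU_disj : ∀ x ∈ U, ∀ y ∈ U, connectedComponentIn U x ≠ connectedComponentIn U y →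
    closure (connectedComponentIn U x) ∩ closure (connectedComponentIn U y) = ∅
  hf_maps : Set.MapsTo f U V
  hf_holo : DifferentiableOn ℂ f U
  hf_proper : ∀ K ⊆ V, IsCompact K → IsCompact (U ∩ f ⁻¹' K)
  hf_crit : ∀ z ∈ U, deriv f z = 0 → ∀ n : ℕ, f^[n] z ∈ U

namespace Setup

variable (S : Setup)

/-- `K_f = {z ∈ U : f^n(z) ∈ U for all n}`. -/
def K : Set ℂ := {z | z ∈ S.U ∧ ∀ n : ℕ, S.f^[n] z ∈ S.U}

/-- The set of critical points of `f`. -/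
def Crit : Set ℂ := {z | z ∈ S.U ∧ deriv S.f z = 0}

/-- `preV n = f^{-n}(V)`, preimages being taken for the partial map `f : U → V`. -/
def preV : ℕ → Set ℂ
  | 0 => S.V
  | n+1 => S.U ∩ S.f ⁻¹' (preV n)

/-- `P` is a puzzle piece of depth `n`: a connected component of `f^{-n}(V)`. -/
def IsPieceOfDepth (n : ℕ) (P : Set ℂ) : Prop :=
  ∃ x ∈ S.preV n, P = connectedComponentIn (S.preV n) x

/-- `P` is a puzzle piece. -/
def IsPiece (P : Set ℂ) : Prop := ∃ n, S.IsPieceOfDepth n P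

/-- `piece n x = P_n(x)`, the puzzle piece of depth `n` containing `x`. -/
def piece (n : ℕ) (x : ℂ) : Set ℂ := connectedComponentIn (S.preV n) x

/-- `X` is a finite union of puzzle pieces. -/
def IsPieceUnion (X : Set ℂ) : Prop :=
  ∃ P : Set (Set ℂ), P.Finite ∧ (∀ Q ∈ P, S.IsPiece Q) ∧ X = ⋃₀ P

/-- `X` is nice: for every connected component `P` of `X` and every `n ≥ 1`,
`f^n(P)` is not strictly contained in `X`. -/
def Nice (X : Set ℂ) : Prop :=
  ∀ x ∈ X, ∀ n : ℕ, 1 ≤ n →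
    ¬ StrictlyContainedIn (S.f^[n] '' connectedComponentIn X x) X

/-- `preIm X n = f^{-n}(X)`, preimages being taken for the partial map `f : U → V`. -/
def preIm (X : Set ℂ) : ℕ → Set ℂ
  | 0 => X
  | n+1 => S.U ∩ S.f ⁻¹' (preIm X n)

/-- `D(X) = ⋃_{k ≥ 0} f^{-k}(X)`. -/
def D (X : Set ℂ) : Set ℂ := ⋃ k, S.preIm X k

/-- For `z ∈ D(X) ∖ X`, `k` is the landing time `k(z)`: the minimal positive
integer with `f^k(z) ∈ X`. -/
def IsLandingTime (X : Set ℂ) (z : ℂ) (k : ℕ) : Prop :=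
  1 ≤ k ∧ S.f^[k] z ∈ X ∧ ∀ j, 1 ≤ j → j < k → S.f^[j] z ∉ X

/-- `landComp X z k = Comp_z(f^{-k}(Comp_{f^k(z)}(X)))`; for `k = k(z)` this is
`L_z(X)`. -/
def landComp (X : Set ℂ) (z : ℂ) (k : ℕ) : Set ℂ :=
  connectedComponentIn (S.preIm (connectedComponentIn X (S.f^[k] z)) k) z

/-- `x` combinatorially accumulates to `y`: for every `n ≥ 0` there is `j ≥ 1`
with `f^j(x) ∈ P_n(y)`. -/
def Acc (x y : ℂ) : Prop := ∀ n : ℕ, ∃ j : ℕ, 1 ≤ j ∧ S.f^[j] x ∈ S.piece n y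

/-- `Forw(x) = {y ∈ K_f : x → y}`. -/
def Forw (x : ℂ) : Set ℂ := {y | y ∈ S.K ∧ S.Acc x y}

/-- The equivalence `c1 ∼ c2` on critical points. -/
def Equiv (c1 c2 : ℂ) : Prop := c1 = c2 ∨ (S.Acc c1 c2 ∧ S.Acc c2 c1)

/-- The class `[c]` of a critical point `c`. -/
def cls (c : ℂ) : Set ℂ := {c' | c' ∈ S.Crit ∧ S.Equiv c c'}

/-- `D(f) = Crit(f)/∼`, the set of equivalence classes. -/
def classes : Set (Set ℂ) := {A | ∃ c ∈ S.Crit, A = S.cls c}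

/-- `[c1] → [c2]`. -/
def ClassAcc (A B : Set ℂ) : Prop := ∃ c1 ∈ A, ∃ c2 ∈ B, S.Acc c1 c2

/-- The partial order on classes: `A ≤ B` iff `A = B` or `B → A`. -/
def ClassLe (A B : Set ℂ) : Prop := A = B ∨ S.ClassAcc B A

/-- The minimal elements of a family of classes w.r.t. `ClassLe`. -/
def minimalsIn (T : Set (Set ℂ)) : Set (Set ℂ) :=
  {A | A ∈ T ∧ ∀ B ∈ T, S.ClassLe B A → B = A}

/-- Auxiliary: `(D_k(f), D_0(f) ∪ ⋯ ∪ D_k(f))`. -/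
def DlevelAux : ℕ → Set (Set ℂ) × Set (Set ℂ)
  | 0 => (S.minimalsIn S.classes, S.minimalsIn S.classes)
  | k+1 =>
      (S.minimalsIn (S.classes \ (DlevelAux k).2),
        (DlevelAux k).2 ∪ S.minimalsIn (S.classes \ (DlevelAux k).2))

/-- `Dlevel k = D_k(f)`. -/
def Dlevel (k : ℕ) : Set (Set ℂ) := (S.DlevelAux k).1

/-- Each connected component of `V` contains at most one critical point. -/
def OneCritPerComp : Prop :=
  ∀ c ∈ S.Crit, ∀ c' ∈ S.Crit,
    connectedComponentIn S.V c = connectedComponentIn S.V c' → c = c'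

/-- Assumption (∗∗): if `c` does not combinatorially accumulate to `c'`, then
`f^j(c) ∉ P_0(c')` for all `j ≥ 1`. -/
def StarStar : Prop :=
  ∀ c ∈ S.Crit, ∀ c' ∈ S.Crit, ¬ S.Acc c c' →
    ∀ j : ℕ, 1 ≤ j → S.f^[j] c ∉ S.piece 0 c'

/-- `K_f(x)`, the connected component of `K_f` containing `x`. -/
def Kcomp (x : ℂ) : Set ℂ := connectedComponentIn S.K x

/-- `P_{n+k}(c1)` is a child of `P_n(c2)`: `f^k(P_{n+k}(c1)) = P_n(c2)` and
`f^{k-1}` maps `P_{n+k-1}(f(c1))` conformally onto `P_n(c2)`. -/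
def IsChild (c1 : ℂ) (k : ℕ) (n : ℕ) (c2 : ℂ) : Prop :=
  1 ≤ k ∧ S.f^[k] '' S.piece (n+k) c1 = S.piece n c2 ∧
  Set.InjOn (S.f^[k-1]) (S.piece (n+k-1) (S.f c1)) ∧
  S.f^[k-1] '' S.piece (n+k-1) (S.f c1) = S.piece n c2

/-- `c` is persistently recurrent: for every `n ≥ 0` and every `c' ∈ [c]`,
`P_n(c')` has only finitely many children. -/
def PersistentlyRecurrent (c : ℂ) : Prop :=
  ∀ n : ℕ, ∀ c' ∈ S.cls c,
    {Q : Set ℂ | ∃ c1 ∈ S.cls c, ∃ k : ℕ, S.IsChild c1 k n c' ∧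
      Q = S.piece (n+k) c1}.Finite

/-- `Crit_n(f)`. -/
def CritN : Set ℂ := {c | c ∈ S.Crit ∧ ∀ c' ∈ S.Crit, ¬ S.Acc c c'}

/-- `Crit_e(f)`. -/
def CritE : Set ℂ := {c | c ∈ S.Crit ∧ ¬ S.Acc c c ∧ ∃ c' ∈ S.Crit, S.Acc c c'}

/-- `Crit_r(f)`. -/
def CritR : Set ℂ := {c | c ∈ S.Crit ∧ S.Acc c c ∧ ¬ S.PersistentlyRecurrent c}

/-- `Crit_p(f)`. -/
def CritP : Set ℂ := {c | c ∈ S.Crit ∧ S.Acc c c ∧ S.PersistentlyRecurrent c}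

end Setup


theorem connectedComponentIn_eq_of_isOpen_diff {α : Type*} [TopologicalSpace α]
    {X Q : Set α} {y : α} (hQ : IsOpen Q) (hXQ : IsOpen (X \ Q)) (hQX : Q ⊆ X)
    (hQc : IsPreconnected Q) (hy : y ∈ Q) : connectedComponentIn X y = Q := by
  refine subset_antisymm ?_ (hQc.subset_connectedComponentIn hy hQX)
  refine isPreconnected_connectedComponentIn.subset_left_of_subset_union hQ hXQ
    disjoint_sdiff_right ?_ ⟨y, mem_connectedComponentIn (hQX hy), hy⟩
  exact (connectedComponentIn_subset X y).trans (by simp)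

namespace Setup

variable (S : Setup)

theorem preIm_mono {A B : Set ℂ} (h : A ⊆ B) : ∀ m, S.preIm A m ⊆ S.preIm B m
  | 0 => h
  | m + 1 => fun _ hx => ⟨hx.1, preIm_mono h m hx.2⟩

theorem preIm_preIm (A : Set ℂ) (a : ℕ) : ∀ b, S.preIm (S.preIm A a) b = S.preIm A (a + b)
  | 0 => rfl
  | b + 1 => congrArg (S.U ∩ S.f ⁻¹' ·) (preIm_preIm A a b)

theorem preIm_V : ∀ n, S.preIm S.V n = S.preV n
  | 0 => rfl
  | n + 1 => congrArg (S.U ∩ S.f ⁻¹' ·) (preIm_V n)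

theorem preIm_preV (n m : ℕ) : S.preIm (S.preV n) m = S.preV (n + m) := by
  rw [← preIm_V, preIm_preIm, preIm_V]

theorem mapsTo_iterate_preIm (A : Set ℂ) : ∀ m, MapsTo S.f^[m] (S.preIm A m) A
  | 0 => mapsTo_id A
  | m + 1 => (mapsTo_iterate_preIm A m).comp (fun _ hx => hx.2)

theorem continuousOn_iterate_preIm (A : Set ℂ) : ∀ m, ContinuousOn S.f^[m] (S.preIm A m)
  | 0 => continuousOn_id
  | m + 1 =>
    (continuousOn_iterate_preIm A m).comp (S.hf_holo.continuousOn.mono inter_subset_left)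
      (fun _ hx => hx.2)

theorem preV_succ_subset : ∀ n, S.preV (n + 1) ⊆ S.preV n
  | 0 => fun _ hx => subset_closure.trans S.hUV hx.1
  | n + 1 => fun _ hx => ⟨hx.1, preV_succ_subset n hx.2⟩

theorem preV_antitone : Antitone S.preV :=
  antitone_nat_of_succ_le S.preV_succ_subset

theorem isOpen_preV : ∀ n, IsOpen (S.preV n)
  | 0 => S.hV_open
  | n + 1 => S.hf_holo.continuousOn.isOpen_inter_preimage S.hU_open (isOpen_preV n)

theorem isOpen_piece (n : ℕ) (x : ℂ) : IsOpen (S.piece n x) :=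
  (S.isOpen_preV n).connectedComponentIn

theorem piece_subset_of_mem {m m' : ℕ} (h : m ≤ m') {x y w : ℂ}
    (hx : w ∈ S.piece m' x) (hy : w ∈ S.piece m y) : S.piece m' x ⊆ S.piece m y := by
  rw [piece, piece, connectedComponentIn_eq hx, connectedComponentIn_eq hy]
  exact connectedComponentIn_mono w (S.preV_antitone h)

theorem image_iterate_subset_piece {L : Set ℂ} (hL : IsPreconnected L) {n m : ℕ}
    (hLV : L ⊆ S.preV (n + m)) {x : ℂ} (hx : x ∈ L) :
    S.f^[m] '' L ⊆ S.piece n (S.f^[m] x) := by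
  rw [← preIm_preV] at hLV
  exact (hL.image _ ((S.continuousOn_iterate_preIm _ m).mono hLV)).subset_connectedComponentIn
    (mem_image_of_mem _ hx) (image_subset_iff.2 ((S.mapsTo_iterate_preIm _ m).mono_left hLV))

/-- The component is the member of smallest depth through `y`: every other member is
nested inside it or disjoint from it. -/
theorem connectedComponentIn_sUnion_pieces {P : Set (Set ℂ)} (hP : ∀ Q ∈ P, S.IsPiece Q)
    {y : ℂ} (hy : y ∈ ⋃₀ P) : ∃ n, connectedComponentIn (⋃₀ P) y = S.piece n y := by
  have hex : ∃ n, y ∈ S.preV n ∧ S.piece n y ∈ P := by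
    obtain ⟨Q, hQP, hyQ⟩ := hy
    obtain ⟨n, x, -, rfl⟩ := hP Q hQP
    exact ⟨n, connectedComponentIn_subset _ _ hyQ, by rwa [piece, ← connectedComponentIn_eq hyQ]⟩
  classical
  set n := Nat.find hex
  obtain ⟨hyV, hnP⟩ := Nat.find_spec hex
  have hsplit : ∀ R ∈ P, R ⊆ S.piece n y ∨ Disjoint R (S.piece n y) := by
    intro R hRP
    obtain ⟨m, x, -, rfl⟩ := hP R hRP
    refine or_iff_not_imp_right.2 fun hR => ?_
    obtain ⟨w, hwR, hwy⟩ := not_disjoint_iff.1 hR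
    rcases le_or_gt n m with hnm | hmn
    · exact S.piece_subset_of_mem hnm hwR hwy
    · have hyR : y ∈ connectedComponentIn (S.preV m) x :=
        S.piece_subset_of_mem hmn.le hwy hwR (mem_connectedComponentIn hyV)
      refine absurd ⟨connectedComponentIn_subset _ _ hyR, ?_⟩ (Nat.find_min hex hmn)
      rwa [piece, ← connectedComponentIn_eq hyR]
  have hdiff : ⋃₀ P \ S.piece n y = ⋃₀ {R ∈ P | Disjoint R (S.piece n y)} := by
    ext w
    constructor
    · rintro ⟨⟨R, hRP, hwR⟩, hwy⟩
      exact ⟨R, ⟨hRP, (hsplit R hRP).resolve_left fun h => hwy (h hwR)⟩, hwR⟩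
    · rintro ⟨R, ⟨hRP, hR⟩, hwR⟩
      exact ⟨⟨R, hRP, hwR⟩, hR.notMem_of_mem_left hwR⟩
  refine ⟨n, connectedComponentIn_eq_of_isOpen_diff (S.isOpen_piece n y) ?_
    (subset_sUnion_of_mem hnP) isPreconnected_connectedComponentIn
    (mem_connectedComponentIn hyV)⟩
  rw [hdiff]
  refine isOpen_sUnion fun R hR => ?_
  obtain ⟨m, x, -, rfl⟩ := hP R hR.1
  exact S.isOpen_piece m x

/-- If `f^i(L_z)` and `f^j(L_z)` met for some `i < j < k`, the nested pieces containing them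
would force `f^{k-j+i}(z)` into `X`, before the landing time `k`. -/
theorem disjoint_image_landComp {X : Set ℂ} {z : ℂ} {k n : ℕ}
    (hC : connectedComponentIn X (S.f^[k] z) = S.piece n (S.f^[k] z))
    (hmin : ∀ j, 1 ≤ j → j < k → S.f^[j] z ∉ X) {i j : ℕ} (hij : i < j) (hjk : j < k) :
    Disjoint (S.f^[i] '' S.landComp X z k) (S.f^[j] '' S.landComp X z k) := by
  set L := S.landComp X z k
  rw [Set.disjoint_left]
  rintro _ ⟨a, haL, rfl⟩ hmem
  -- `L` is empty unless `z ∈ f^{-k}(C)`, so meeting points force `z ∈ L`.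
  have hzL : z ∈ L := mem_connectedComponentIn (connectedComponentIn_nonempty_iff.1 ⟨a, haL⟩)
  have hLV : ∀ t ≤ k, L ⊆ S.preV (n + (k - t) + t) := fun t ht => by
    rw [add_assoc, Nat.sub_add_cancel ht, ← preIm_preV]
    exact (connectedComponentIn_subset _ _).trans
      (S.preIm_mono (hC.trans_subset (connectedComponentIn_subset _ _)) k)
  have himage : ∀ t ≤ k, S.f^[t] '' L ⊆ S.piece (n + (k - t)) (S.f^[t] z) := fun t ht =>
    S.image_iterate_subset_piece isPreconnected_connectedComponentIn (hLV t ht) hzL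
  have hnested : S.piece (n + (k - i)) (S.f^[i] z) ⊆ S.piece (n + (k - j)) (S.f^[j] z) :=
    S.piece_subset_of_mem (by omega) (himage i (by omega) (mem_image_of_mem _ haL))
      (himage j hjk.le hmem)
  have hland : S.f^[k - j] '' S.piece (n + (k - j)) (S.f^[j] z) ⊆ S.piece n (S.f^[k] z) := by
    have hjz := himage j hjk.le (mem_image_of_mem _ hzL)
    rw [show S.f^[k] z = S.f^[k - j] (S.f^[j] z) by
      rw [← Function.iterate_add_apply, Nat.sub_add_cancel hjk.le]]
    exact S.image_iterate_subset_piece isPreconnected_connectedComponentIn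
      (connectedComponentIn_subset _ _) hjz
  refine hmin (k - j + i) (by omega) (by omega) ?_
  rw [Function.iterate_add_apply]
  refine connectedComponentIn_subset X _ (hC ▸ hland (mem_image_of_mem _ ?_))
  exact hnested (himage i (by omega) (mem_image_of_mem _ hzL))

end Setup

theorem stmt_0_general (S : Setup) (X : Set ℂ) (hX : S.IsPieceUnion X)
    (z : ℂ) (k : ℕ) (hk : S.IsLandingTime X z k) :
    ∀ i < k, ∀ j < k, i ≠ j →
      Disjoint (S.f^[i] '' S.landComp X z k) (S.f^[j] '' S.landComp X z k) := by
  obtain ⟨-, hkX, hmin⟩ := hk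
  obtain ⟨P, -, hP, rfl⟩ := hX
  obtain ⟨n, hC⟩ := S.connectedComponentIn_sUnion_pieces hP hkX
  intro i hi j hj hij
  rcases hij.lt_or_gt with hij | hji
  · exact S.disjoint_image_landComp hC hmin hij hj
  · exact (S.disjoint_image_landComp hC hmin hji hi).symm

/-- For a map in the set-up and a finite union `X` of puzzle pieces,
for every `z ∈ D(X) ∖ X` the sets `L_z(X), f(L_z(X)), …, f^{k(z)-1}(L_z(X))`
are pairwise disjoint. -/
theorem stmt_0 (S : Setup) (X : Set ℂ) (hX : S.IsPieceUnion X)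
    (z : ℂ) (hz : z ∈ S.D X \ X) (k : ℕ) (hk : S.IsLandingTime X z k) :
    ∀ i < k, ∀ j < k, i ≠ j →
      Disjoint (S.f^[i] '' S.landComp X z k) (S.f^[j] '' S.landComp X z k) :=
  stmt_0_general S X hX z k hk
end
end

section
/- Let f : U → V be a map in the set-up and let X be a finite union of puzzle pieces which is nice. Then for every z ∈ D(X) ∖ X and every integer i with 0 < i < k(z), one has f^i(z) ∈ D(X) ∖ X and f^i(L_z(X)) = L_{f^i(z)}(X). -/
open Set Function Topology

noncomputable section

namespace Setup

variable (S : Setup)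

lemma mem_preIm_iff (Y : Set ℂ) : ∀ (n : ℕ) (w : ℂ),
    w ∈ S.preIm Y n ↔ (∀ j < n, S.f^[j] w ∈ S.U) ∧ S.f^[n] w ∈ Y := by
  intro n
  induction n with
  | zero => intro w; simp [preIm]
  | succ n ih =>
    intro w
    constructor
    · rintro ⟨hwU, hw⟩
      obtain ⟨h1, h2⟩ := (ih (S.f w)).mp hw
      refine ⟨fun j hj => ?_, ?_⟩
      · cases j with
        | zero => simpa using hwU
        | succ j =>
          rw [Function.iterate_succ_apply]
          exact h1 j (by omega)
      · rw [Function.iterate_succ_apply]; exact h2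
    · rintro ⟨h1, h2⟩
      refine ⟨by simpa using h1 0 (by omega), (ih (S.f w)).mpr ⟨fun j hj => ?_, ?_⟩⟩
      · rw [← Function.iterate_succ_apply]
        exact h1 (j+1) (by omega)
      · rw [← Function.iterate_succ_apply]; exact h2

lemma preIm_mono_s4 {Y Y' : Set ℂ} (h : Y ⊆ Y') (n : ℕ) : S.preIm Y n ⊆ S.preIm Y' n := by
  intro w hw
  rw [S.mem_preIm_iff] at hw ⊢
  exact ⟨hw.1, h hw.2⟩

lemma preIm_subset_U (Y : Set ℂ) (n : ℕ) (hn : 1 ≤ n) : S.preIm Y n ⊆ S.U := by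
  intro w hw
  rw [S.mem_preIm_iff] at hw
  simpa using hw.1 0 (by omega)

lemma preIm_add (Y : Set ℂ) (m n : ℕ) : S.preIm Y (m + n) = S.preIm (S.preIm Y n) m := by
  induction m with
  | zero => simp [preIm]
  | succ m ih =>
    have : m + 1 + n = (m + n) + 1 := by omega
    rw [this]
    show S.U ∩ S.f ⁻¹' (S.preIm Y (m+n)) = S.U ∩ S.f ⁻¹' (S.preIm (S.preIm Y n) m)
    rw [ih]

lemma isOpen_preIm {Y : Set ℂ} (hY : IsOpen Y) (n : ℕ) : IsOpen (S.preIm Y n) := by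
  induction n with
  | zero => exact hY
  | succ n ih =>
    exact (S.hf_holo.continuousOn).isOpen_inter_preimage S.hU_open ih

lemma isCompact_preIm {K : Set ℂ} (hKV : K ⊆ S.V) (hK : IsCompact K) (n : ℕ) :
    IsCompact (S.preIm K n) := by
  have main : ∀ n : ℕ, IsCompact (S.preIm K n) ∧ S.preIm K n ⊆ S.V := by
    intro n
    induction n with
    | zero => exact ⟨hK, hKV⟩
    | succ n ih =>
      refine ⟨S.hf_proper _ ih.2 ih.1, fun w hw => S.hUV (subset_closure hw.1)⟩
  exact (main n).1

lemma continuousAt_iter (n : ℕ) : ∀ w : ℂ, (∀ j < n, S.f^[j] w ∈ S.U) →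
    ContinuousAt (S.f^[n]) w := by
  induction n with
  | zero => intro w _; exact continuousAt_id
  | succ n ih =>
    intro w h
    rw [Function.iterate_succ]
    have hfw : ContinuousAt S.f w := by
      have := h 0 (by omega)
      exact (S.hf_holo.continuousOn).continuousAt (S.hU_open.mem_nhds (by simpa using this))
    have h2 : ContinuousAt (S.f^[n]) (S.f w) := by
      refine ih (S.f w) (fun j hj => ?_)
      rw [← Function.iterate_succ_apply]
      exact h (j+1) (by omega)
    exact h2.comp hfw
lemma not_unbounded_univ : ¬ (Set.univ : Set ℂ) ⊆ Metric.closedBall 0 0 ∨ True := Or.inr trivial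

lemma fOpen {s : Set ℂ} (hsU : s ⊆ S.U) (hs : IsOpen s) : IsOpen (S.f '' s) := by
  have himg : S.f '' s = ⋃ w ∈ s, S.f '' (s ∩ connectedComponentIn S.U w) := by
    ext x
    simp only [Set.mem_iUnion, Set.mem_image]
    constructor
    · rintro ⟨a, ha, rfl⟩
      exact ⟨a, ha, a, ⟨ha, mem_connectedComponentIn (hsU ha)⟩, rfl⟩
    · rintro ⟨w, hw, a, ⟨ha, _⟩, rfl⟩
      exact ⟨a, ha, rfl⟩
  rw [himg]
  refine isOpen_iUnion fun w => isOpen_iUnion fun hw => ?_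
  set W := connectedComponentIn S.U w with hW
  have hWU : W ⊆ S.U := connectedComponentIn_subset _ _
  have hwW : w ∈ W := mem_connectedComponentIn (hsU hw)
  have han : AnalyticOnNhd ℂ S.f W := (S.hf_holo.analyticOnNhd S.hU_open).mono hWU
  rcases han.is_constant_or_isOpen isPreconnected_connectedComponentIn with hconst | hopen
  · exfalso
    obtain ⟨c, hc⟩ := hconst
    have hcV : c ∈ S.V := hc w hwW ▸ S.hf_maps (hsU hw)
    set K := S.U ∩ S.f ⁻¹' {c} with hK
    have hKcpt : IsCompact K := S.hf_proper {c} (by simpa using hcV) isCompact_singleton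
    have hWK : W ⊆ K := fun x hx => ⟨hWU hx, by simp [hc x hx]⟩
    have hclK : closure W ⊆ K := hKcpt.isClosed.closure_subset_iff.mpr hWK
    have hWo : IsOpen W := S.hU_open.connectedComponentIn
    -- W is not closed: otherwise clopen, so univ, contradicting compactness
    have hWne : ¬ closure W ⊆ W := by
      intro hcl
      have hWc : IsClosed W := closure_subset_iff_isClosed.mp hcl
      rcases isClopen_iff.mp ⟨hWc, hWo⟩ with h0 | huniv
      · rw [h0] at hwW; exact hwW
      · have : K = Set.univ := Set.eq_univ_of_univ_subset (huniv ▸ hWK)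
        exact hKcpt.ne_univ this
    obtain ⟨q, hqcl, hqW⟩ : ∃ q, q ∈ closure W ∧ q ∉ W := by
      by_contra h
      push_neg at h
      exact hWne h
    have hqU : q ∈ S.U := (hclK hqcl).1
    have hqo : IsOpen (connectedComponentIn S.U q) := S.hU_open.connectedComponentIn
    obtain ⟨p, hp1, hp2⟩ := mem_closure_iff.mp hqcl _ hqo (mem_connectedComponentIn hqU)
    have e1 : connectedComponentIn S.U q = connectedComponentIn S.U p := connectedComponentIn_eq hp1
    have e2 : W = connectedComponentIn S.U p := connectedComponentIn_eq hp2
    exact hqW (e2 ▸ e1 ▸ mem_connectedComponentIn hqU)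
  · exact hopen _ Set.inter_subset_right (hs.inter S.hU_open.connectedComponentIn)

lemma iterOpen (n : ℕ) : ∀ s : Set ℂ, IsOpen s → (∀ w ∈ s, ∀ j < n, S.f^[j] w ∈ S.U) →
    IsOpen (S.f^[n] '' s) := by
  induction n with
  | zero => intro s hs _; simpa using hs
  | succ n ih =>
    intro s hs h
    have h0 : s ⊆ S.U := fun w hw => by simpa using h w hw 0 (by omega)
    have : S.f^[n+1] '' s = S.f^[n] '' (S.f '' s) := by
      rw [Function.iterate_succ, Set.image_comp]
    rw [this]
    refine ih _ (S.fOpen h0 hs) ?_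
    rintro y ⟨w, hw, rfl⟩ j hj
    rw [← Function.iterate_succ_apply]
    exact h w hw (j+1) (by omega)

lemma preV_eq (n : ℕ) : S.preV n = S.preIm S.V n := by
  induction n with
  | zero => rfl
  | succ n ih => show S.U ∩ S.f ⁻¹' (S.preV n) = S.U ∩ S.f ⁻¹' (S.preIm S.V n); rw [ih]

lemma isOpen_of_pieceUnion {X : Set ℂ} (hX : S.IsPieceUnion X) : IsOpen X := by
  obtain ⟨P, _, hP, rfl⟩ := hX
  refine isOpen_sUnion fun Q hQ => ?_
  obtain ⟨n, x, hx, rfl⟩ := hP Q hQ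
  exact (S.preV_eq n ▸ S.isOpen_preIm S.hV_open n).connectedComponentIn

lemma surj {B : Set ℂ} (hBo : IsOpen B) (hBc : IsPreconnected B) (hBV : B ⊆ S.V)
    (i : ℕ) (z : ℂ) (hz : z ∈ S.preIm B i) :
    S.f^[i] '' (connectedComponentIn (S.preIm B i) z) = B := by
  set s := S.preIm B i with hs
  have hso : IsOpen s := S.isOpen_preIm hBo i
  set A := connectedComponentIn s z with hA
  have hAs : A ⊆ s := connectedComponentIn_subset _ _
  have hAo : IsOpen A := hso.connectedComponentIn
  have hiterU : ∀ w ∈ s, ∀ j < i, S.f^[j] w ∈ S.U := fun w hw =>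
    ((S.mem_preIm_iff B i w).mp hw).1
  set T := S.f^[i] '' A with hT
  have hTB : T ⊆ B := by
    rintro x ⟨a, ha, rfl⟩
    exact ((S.mem_preIm_iff B i a).mp (hAs ha)).2
  have hTo : IsOpen T := S.iterOpen i A hAo (fun w hw => hiterU w (hAs hw))
  have hTne : S.f^[i] z ∈ T := ⟨z, mem_connectedComponentIn hz, rfl⟩
  -- closedness in B
  have hcl : ∀ b ∈ B, b ∈ closure T → b ∈ T := by
    intro b hb hbc
    obtain ⟨K, hKcpt, hbK, hKB⟩ := exists_compact_subset hBo hb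
    set M := A ∩ S.preIm K i with hM
    have hKV : K ⊆ S.V := hKB.trans hBV
    have hKicpt : IsCompact (S.preIm K i) := S.isCompact_preIm hKV hKcpt i
    have hMc : IsCompact M := by
      refine hKicpt.of_isClosed_subset ?_ Set.inter_subset_right
      refine isClosed_of_closure_subset ?_
      intro a hac
      have haK : a ∈ S.preIm K i :=
        hKicpt.isClosed.closure_subset ((closure_mono Set.inter_subset_right) hac)
      have has : a ∈ s := S.preIm_mono_s4 hKB i haK
      have haA : a ∈ closure A := (closure_mono Set.inter_subset_left) hac
      have hao : IsOpen (connectedComponentIn s a) := hso.connectedComponentIn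
      obtain ⟨p, hp1, hp2⟩ := mem_closure_iff.mp haA _ hao (mem_connectedComponentIn has)
      have e1 : connectedComponentIn s a = connectedComponentIn s p := connectedComponentIn_eq hp1
      have e2 : A = connectedComponentIn s p := connectedComponentIn_eq hp2
      exact ⟨e2 ▸ e1 ▸ mem_connectedComponentIn has, haK⟩
    have hcont : ContinuousOn (S.f^[i]) M := fun w hw =>
      (S.continuousAt_iter i w (hiterU w (hAs hw.1))).continuousWithinAt
    have himgc : IsCompact (S.f^[i] '' M) := hMc.image_of_continuousOn hcont
    have hsub : T ∩ interior K ⊆ S.f^[i] '' M := by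
      rintro x ⟨⟨a, ha, rfl⟩, hxK⟩
      refine ⟨a, ⟨ha, (S.mem_preIm_iff K i a).mpr ⟨hiterU a (hAs ha), interior_subset hxK⟩⟩, rfl⟩
    have hb2 : b ∈ closure (T ∩ interior K) := by
      rw [mem_closure_iff] at hbc ⊢
      intro O hO hbO
      obtain ⟨y, hy1, hy2⟩ := hbc (O ∩ interior K) (hO.inter isOpen_interior) ⟨hbO, hbK⟩
      exact ⟨y, hy1.1, hy2, hy1.2⟩
    have : b ∈ S.f^[i] '' M := himgc.isClosed.closure_subset ((closure_mono hsub) hb2)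
    obtain ⟨a, ha, rfl⟩ := this
    exact ⟨a, ha.1, rfl⟩
  -- clopen argument
  refine Set.Subset.antisymm hTB ?_
  by_contra hnot
  rw [Set.not_subset] at hnot
  obtain ⟨b, hbB, hbT⟩ := hnot
  have := hBc T (closure T)ᶜ hTo (isClosed_closure.isOpen_compl)
    (fun x hx => by
      by_cases h : x ∈ closure T
      · exact Or.inl (hcl x hx h)
      · exact Or.inr h)
    ⟨S.f^[i] z, hTB hTne, hTne⟩
    ⟨b, hbB, fun h => hbT (hcl b hbB h)⟩
  obtain ⟨x, _, hx1, hx2⟩ := this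
  exact hx2 (subset_closure hx1)

end Setup


/-- For a map in the set-up and a nice finite union `X` of puzzle
pieces, for every `z ∈ D(X) ∖ X` and every `0 < i < k(z)`, one has
`f^i(z) ∈ D(X) ∖ X` and `f^i(L_z(X)) = L_{f^i(z)}(X)`. -/
theorem stmt_4 (S : Setup) (X : Set ℂ) (hX : S.IsPieceUnion X) (hnice : S.Nice X)
    (z : ℂ) (hz : z ∈ S.D X \ X) (k : ℕ) (hk : S.IsLandingTime X z k)
    (i : ℕ) (hi0 : 0 < i) (hik : i < k) :
    S.f^[i] z ∈ S.D X \ X ∧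
    ∀ k' : ℕ, S.IsLandingTime X (S.f^[i] z) k' →
      S.f^[i] '' S.landComp X z k = S.landComp X (S.f^[i] z) k' := by
  obtain ⟨hzD, hzX⟩ := hz
  obtain ⟨m, hm⟩ := Set.mem_iUnion.mp hzD
  obtain ⟨hk1, hkX, hkmin⟩ := hk
  have hmpos : m ≠ 0 := by rintro rfl; exact hzX hm
  have hkm : k ≤ m := by
    by_contra h
    push_neg at h
    exact hkmin m (by omega) h (((S.mem_preIm_iff X m z).mp hm).2)
  have hU : ∀ j < m, S.f^[j] z ∈ S.U := ((S.mem_preIm_iff X m z).mp hm).1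
  have hXo : IsOpen X := S.isOpen_of_pieceUnion hX
  set C := connectedComponentIn X (S.f^[k] z) with hC
  have hCo : IsOpen C := hXo.connectedComponentIn
  have hzC : z ∈ S.preIm C k :=
    (S.mem_preIm_iff C k z).mpr ⟨fun j hj => hU j (by omega), mem_connectedComponentIn hkX⟩
  have hfiD : S.f^[i] z ∈ S.D X := by
    refine Set.mem_iUnion.mpr ⟨k - i, (S.mem_preIm_iff X (k-i) _).mpr ⟨fun j hj => ?_, ?_⟩⟩
    · rw [← Function.iterate_add_apply]; exact hU (j + i) (by omega)
    · rw [← Function.iterate_add_apply]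
      have h' : k - i + i = k := by omega
      rw [h']; exact hkX
  have hfiX : S.f^[i] z ∉ X := hkmin i hi0 hik
  refine ⟨⟨hfiD, hfiX⟩, ?_⟩
  intro k' hk'
  obtain ⟨hk'1, hk'X, hk'min⟩ := hk'
  have hkik : S.f^[k-i] (S.f^[i] z) = S.f^[k] z := by
    rw [← Function.iterate_add_apply]; congr 1; omega
  have hik' : i + k' = k := by
    by_contra h
    rcases Nat.lt_or_ge (i + k') k with hlt | hge
    · exact hkmin (k' + i) (by omega) (by omega)
        (by rw [Function.iterate_add_apply]; exact hk'X)
    · have hlt2 : k - i < k' := by omega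
      exact hk'min (k - i) (by omega) hlt2 (hkik ▸ hkX)
  have hCk' : S.f^[k'] (S.f^[i] z) = S.f^[k] z := by
    rw [← Function.iterate_add_apply]; congr 1; omega
  set B := connectedComponentIn (S.preIm C k') (S.f^[i] z) with hB
  have hBo : IsOpen B := (S.isOpen_preIm hCo k').connectedComponentIn
  have hBc : IsPreconnected B := isPreconnected_connectedComponentIn
  have hBsub : B ⊆ S.preIm C k' := connectedComponentIn_subset _ _
  have hBV : B ⊆ S.V := fun x hx =>
    S.hUV (subset_closure (S.preIm_subset_U C k' hk'1 (hBsub hx)))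
  have hfizC : S.f^[i] z ∈ S.preIm C k' := by
    refine (S.mem_preIm_iff C k' _).mpr ⟨fun j hj => ?_, ?_⟩
    · rw [← Function.iterate_add_apply]; exact hU (j + i) (by omega)
    · rw [hCk']; exact mem_connectedComponentIn hkX
  have hzB : z ∈ S.preIm B i :=
    (S.mem_preIm_iff B i z).mpr ⟨fun j hj => hU j (by omega),
      mem_connectedComponentIn hfizC⟩
  have hsurj := S.surj hBo hBc hBV i z hzB
  set A' := connectedComponentIn (S.preIm B i) z with hA'
  -- A' = landComp X z k
  have hAdd : S.preIm C k = S.preIm (S.preIm C k') i := by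
    rw [← S.preIm_add, hik']
  have h1 : S.preIm B i ⊆ S.preIm C k := by
    rw [hAdd]; exact S.preIm_mono_s4 hBsub i
  set A := connectedComponentIn (S.preIm C k) z with hA2
  have hA'A : A' ⊆ A :=
    isPreconnected_connectedComponentIn.subset_connectedComponentIn
      (mem_connectedComponentIn hzB) ((connectedComponentIn_subset _ _).trans h1)
  have hAC : A ⊆ S.preIm C k := connectedComponentIn_subset _ _
  have hAiter : ∀ w ∈ A, ∀ j < k, S.f^[j] w ∈ S.U := fun w hw =>
    ((S.mem_preIm_iff C k w).mp (hAC hw)).1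
  have hcont : ContinuousOn (S.f^[i]) A := fun w hw =>
    (S.continuousAt_iter i w (fun j hj => hAiter w hw j (by omega))).continuousWithinAt
  have himg_sub : S.f^[i] '' A ⊆ S.preIm C k' := by
    rintro x ⟨w, hw, rfl⟩
    have hw2 := hAC hw
    rw [hAdd] at hw2
    exact ((S.mem_preIm_iff (S.preIm C k') i w).mp hw2).2
  have himg_pc : IsPreconnected (S.f^[i] '' A) :=
    isPreconnected_connectedComponentIn.image _ hcont
  have hzA : z ∈ A := mem_connectedComponentIn hzC
  have himgB : S.f^[i] '' A ⊆ B :=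
    himg_pc.subset_connectedComponentIn ⟨z, hzA, rfl⟩ himg_sub
  have hAB : A ⊆ S.preIm B i := fun w hw =>
    (S.mem_preIm_iff B i w).mpr ⟨fun j hj => hAiter w hw j (by omega), himgB ⟨w, hw, rfl⟩⟩
  have hAA' : A ⊆ A' :=
    isPreconnected_connectedComponentIn.subset_connectedComponentIn hzA hAB
  have hAeq : A = A' := Set.Subset.antisymm hAA' hA'A
  show S.f^[i] '' S.landComp X z k = S.landComp X (S.f^[i] z) k'
  simp only [Setup.landComp]
  rw [hCk', ← hC, ← hB, ← hA2, hAeq]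
  exact hsurj
end
end

section
/- Let f : U → V be a map in the set-up such that each connected component of V contains at most one critical point of f. Then for every k ≥ 1, every class [c] ∈ D_k(f) accumulates to some element of D_0(f). -/
open Set Function Topology

noncomputable section

namespace Setup

variable (S : Setup)

/-- `f` maps pieces of depth `m+1` into pieces of depth `m`. -/
lemma map_piece_succ {m : ℕ} {w u : ℂ} (hu : u ∈ S.piece (m+1) w) :
    S.f u ∈ S.piece m (S.f w) := by
  have hw : w ∈ S.preV (m+1) :=
    connectedComponentIn_nonempty_iff.mp ⟨u, hu⟩
  have hsub : S.piece (m+1) w ⊆ S.preV (m+1) := connectedComponentIn_subset _ _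
  have hconn : IsConnected (S.piece (m+1) w) :=
    (isConnected_connectedComponentIn_iff).mpr hw
  have hcont : ContinuousOn S.f (S.piece (m+1) w) :=
    (S.hf_holo.continuousOn).mono (fun z hz => (hsub hz).1)
  have himg : IsConnected (S.f '' S.piece (m+1) w) := hconn.image _ hcont
  have himg_sub : S.f '' S.piece (m+1) w ⊆ S.preV m := by
    rintro _ ⟨z, hz, rfl⟩
    exact (hsub hz).2
  have hfw : S.f w ∈ S.f '' S.piece (m+1) w :=
    ⟨w, mem_connectedComponentIn hw, rfl⟩
  have := himg.isPreconnected.subset_connectedComponentIn hfw himg_sub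
  exact this ⟨u, hu, rfl⟩

lemma map_piece_iter (i : ℕ) {m : ℕ} {w u : ℂ} (hu : u ∈ S.piece (m+i) w) :
    S.f^[i] u ∈ S.piece m (S.f^[i] w) := by
  induction i generalizing u w with
  | zero => simpa using hu
  | succ i ih =>
    have hu' : u ∈ S.piece ((m+i)+1) w := by
      have : m + (i+1) = (m+i)+1 := by ring
      rwa [this] at hu
    have h1 := S.map_piece_succ hu'
    have h2 := ih h1
    simpa [Function.iterate_succ_apply] using h2

/-- Combinatorial accumulation is transitive. -/
lemma acc_trans {x y z : ℂ} (hxy : S.Acc x y) (hyz : S.Acc y z) : S.Acc x z := by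
  intro n
  obtain ⟨i, hi1, hiy⟩ := hyz n
  obtain ⟨j, hj1, hjx⟩ := hxy (n+i)
  refine ⟨i+j, le_trans hi1 (Nat.le_add_right i j), ?_⟩
  have h := S.map_piece_iter i (m := n) hjx
  have heq : S.piece n (S.f^[i] y) = S.piece n z := (connectedComponentIn_eq hiy).symm
  rw [Function.iterate_add_apply]
  rw [heq] at h
  exact h

lemma cls_acc {c b b' : ℂ} (hb : b ∈ S.cls c) (hb' : b' ∈ S.cls c) :
    b = b' ∨ S.Acc b b' := by
  rcases hb.2 with rfl | ⟨hcb, hbc⟩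
  · rcases hb'.2 with rfl | ⟨hcb', _⟩
    · exact Or.inl rfl
    · exact Or.inr hcb'
  · rcases hb'.2 with rfl | ⟨hcb', _⟩
    · exact Or.inr hbc
    · exact Or.inr (S.acc_trans hbc hcb')

/-- `ClassAcc` is transitive through a genuine class. -/
lemma classAcc_trans {A B C : Set ℂ} (hB : B ∈ S.classes)
    (hAB : S.ClassAcc A B) (hBC : S.ClassAcc B C) : S.ClassAcc A C := by
  obtain ⟨a, ha, b, hb, hab⟩ := hAB
  obtain ⟨b', hb', c, hc, hbc⟩ := hBC
  obtain ⟨c0, _, rfl⟩ := hB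
  rcases S.cls_acc hb hb' with rfl | hbb'
  · exact ⟨a, ha, c, hc, S.acc_trans hab hbc⟩
  · exact ⟨a, ha, c, hc, S.acc_trans hab (S.acc_trans hbb' hbc)⟩

lemma minimalsIn_subset (T : Set (Set ℂ)) : S.minimalsIn T ⊆ T :=
  fun _ h => h.1

lemma dlevel_subset_classes (k : ℕ) : S.Dlevel k ⊆ S.classes := by
  cases k with
  | zero => exact S.minimalsIn_subset _
  | succ k => exact (S.minimalsIn_subset _).trans (Set.diff_subset)

lemma dlevelAux_snd_mono (k : ℕ) : (S.DlevelAux k).2 ⊆ (S.DlevelAux (k+1)).2 := by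
  simp [DlevelAux]

lemma dlevel0_subset_snd (k : ℕ) : S.Dlevel 0 ⊆ (S.DlevelAux k).2 := by
  induction k with
  | zero => exact fun x h => h
  | succ k ih => exact ih.trans (S.dlevelAux_snd_mono k)

lemma mem_snd_exists_dlevel (k : ℕ) {B : Set ℂ} (hB : B ∈ (S.DlevelAux k).2) :
    ∃ j ≤ k, B ∈ S.Dlevel j := by
  induction k with
  | zero => exact ⟨0, le_refl 0, hB⟩
  | succ k ih =>
    rcases hB with h | h
    · obtain ⟨j, hj, hBj⟩ := ih h
      exact ⟨j, hj.trans (Nat.le_succ k), hBj⟩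
    · exact ⟨k+1, le_refl _, h⟩

end Setup

/-- For every `k ≥ 1`, every class in `D_k(f)` accumulates to some
element of `D_0(f)`. -/
theorem stmt_9 (S : Setup) (h1 : S.OneCritPerComp) :
    ∀ k : ℕ, 1 ≤ k → ∀ A ∈ S.Dlevel k, ∃ B ∈ S.Dlevel 0, S.ClassAcc A B := by
  intro k
  induction k using Nat.strong_induction_on with
  | _ k ih =>
    intro hk A hA
    obtain ⟨k', rfl⟩ : ∃ k', k = k' + 1 := ⟨k - 1, (Nat.succ_pred_eq_of_pos hk).symm⟩
    have hA' : A ∈ S.minimalsIn (S.classes \ (S.DlevelAux k').2) := hA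
    have hAcls : A ∈ S.classes := hA'.1.1
    have hAnot0 : A ∉ S.Dlevel 0 := fun h => hA'.1.2 (S.dlevel0_subset_snd k' h)
    -- A is not minimal in classes
    have : ¬ (∀ B ∈ S.classes, S.ClassLe B A → B = A) := by
      intro h
      exact hAnot0 ⟨hAcls, h⟩
    push_neg at this
    obtain ⟨B, hBcls, hBle, hBne⟩ := this
    have hAB : S.ClassAcc A B := by
      rcases hBle with rfl | h
      · exact absurd rfl hBne
      · exact h
    -- B must be in the previous levels
    have hBprev : B ∈ (S.DlevelAux k').2 := by
      by_contra hBn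
      exact hBne (hA'.2 B ⟨hBcls, hBn⟩ hBle)
    obtain ⟨j, hjk, hBj⟩ := S.mem_snd_exists_dlevel k' hBprev
    rcases Nat.eq_zero_or_pos j with rfl | hj
    · exact ⟨B, hBj, hAB⟩
    · have hjlt : j < k' + 1 := Nat.lt_succ_of_le hjk
      obtain ⟨C, hC0, hBC⟩ := ih j hjlt hj B hBj
      exact ⟨C, hC0, S.classAcc_trans hBcls hAB hBC⟩
end
end
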